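/- Let Λ = U_n ⊙ ⋯ ⊙ U_1 and Λ̄ = Ū_n ⊙ ⋯ ⊙ Ū_1 be Khatri-Rao products where each U_i, Ū_i ∈ ℝ^{d_i × R} has columns of Euclidean norm at most 1. If ‖u_r^{(i)} − ū_r^{(i)}‖₂ ≤ ε/(n√R) for every column index r and every mode i, then ‖Λ − Λ̄‖_F ≤ ε. -/

import Mathlib

/-!
The `r`-th column of a Khatri-Rao product is the outer product of the `r`-th columns of the
factors. The outer product is multilinear with `‖u₁ ⊗ ⋯ ⊗ uₙ‖ = ∏ ‖uᵢ‖`, so replacing the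
factors one at a time (a telescoping sum) shows that on unit balls it is `1`-Lipschitz with
respect to `∑ ‖uᵢ - ūᵢ‖`. Each column therefore moves by at most `ε / √R`, and summing the
squares over the `R` columns gives the Frobenius bound `ε`.
-/

open Finset

theorem EuclideanSpace.real_norm_eq {κ : Type*} [Fintype κ] (x : EuclideanSpace ℝ κ) :
    ‖x‖ = √(∑ j, x j ^ 2) := by
  rw [← EuclideanSpace.real_norm_sq_eq, Real.sqrt_sq (norm_nonneg x)]

section OuterProduct

variable {ι : Type*} [Fintype ι] {κ : ι → Type*}

noncomputable def outerProduct :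
    MultilinearMap ℝ (fun i ↦ EuclideanSpace ℝ (κ i)) (EuclideanSpace ℝ (∀ i, κ i)) where
  toFun v := WithLp.toLp 2 fun x ↦ ∏ i, v i (x i)
  map_update_add' v i a b := by
    ext x
    simp only [PiLp.add_apply,
      Function.apply_update (fun j (w : EuclideanSpace ℝ (κ j)) ↦ w (x j)),
      prod_update_of_mem (mem_univ i), add_mul]
  map_update_smul' v i c a := by
    ext x
    simp only [PiLp.smul_apply, smul_eq_mul,
      Function.apply_update (fun j (w : EuclideanSpace ℝ (κ j)) ↦ w (x j)),
      prod_update_of_mem (mem_univ i), mul_assoc]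

@[simp]
theorem outerProduct_apply (v : ∀ i, EuclideanSpace ℝ (κ i)) (x : ∀ i, κ i) :
    outerProduct v x = ∏ i, v i (x i) := rfl

variable [DecidableEq ι] [∀ i, Fintype (κ i)]

theorem norm_outerProduct (v : ∀ i, EuclideanSpace ℝ (κ i)) :
    ‖outerProduct v‖ = ∏ i, ‖v i‖ := by
  simp only [EuclideanSpace.real_norm_eq, outerProduct_apply, ← prod_pow]
  rw [← Fintype.prod_sum fun i j ↦ v i j ^ 2,
    Real.sqrt_prod _ fun i _ ↦ sum_nonneg fun j _ ↦ sq_nonneg _]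

theorem norm_outerProduct_sub_le {a b : ∀ i, EuclideanSpace ℝ (κ i)}
    (ha : ∀ i, ‖a i‖ ≤ 1) (hb : ∀ i, ‖b i‖ ≤ 1) :
    ‖outerProduct a - outerProduct b‖ ≤ ∑ i, ‖a i - b i‖ := by
  have h := outerProduct.norm_image_sub_le_of_bound' zero_le_one
    (fun v ↦ by simpa using (norm_outerProduct v).le) a b
  refine (one_mul (_ : ℝ) ▸ h).trans (sum_le_sum fun i _ ↦ ?_)
  calc ∏ j, (if j = i then ‖a i - b i‖ else max ‖a j‖ ‖b j‖)
      ≤ ∏ j, (if j = i then ‖a i - b i‖ else 1) := by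
        gcongr with j
        split_ifs
        exacts [le_rfl, max_le (ha j) (hb j)]
    _ = ‖a i - b i‖ := by simp

end OuterProduct

theorem Real.sqrt_sum_le_sqrt_card_mul {ι : Type*} [Fintype ι] {s : ι → ℝ} {c : ℝ}
    (hc : ∀ r, √(s r) ≤ c) : √(∑ r, s r) ≤ √(Fintype.card ι) * c := by
  rcases isEmpty_or_nonempty ι with _ | ⟨⟨r₀⟩⟩
  · simp
  have hc₀ : 0 ≤ c := (Real.sqrt_nonneg _).trans (hc r₀)
  rw [Real.sqrt_le_iff, mul_pow, Real.sq_sqrt (Nat.cast_nonneg _)]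
  refine ⟨by positivity, ?_⟩
  calc ∑ r, s r ≤ ∑ _r : ι, c ^ 2 := sum_le_sum fun r _ ↦ (Real.sqrt_le_iff.mp (hc r)).2
    _ = Fintype.card ι * c ^ 2 := by simp

/-- covering bound for Khatri-Rao products.  If all columns of the
`U i` and `Ubar i` have Euclidean norm at most one, and corresponding columns
differ by at most `ε / (n √R)`, then the Khatri-Rao products differ by at most
`ε` in Frobenius norm. -/
theorem khatriRao_diff_frobenius_le (n R : ℕ) (hn : 0 < n) (hR : 0 < R)
    (d : Fin n → ℕ)
    (U Ubar : ∀ i : Fin n, Matrix (Fin (d i)) (Fin R) ℝ)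
    (hU : ∀ i r, Real.sqrt (∑ j, (U i j r) ^ 2) ≤ 1)
    (hUbar : ∀ i r, Real.sqrt (∑ j, (Ubar i j r) ^ 2) ≤ 1)
    (ε : ℝ)
    (hclose : ∀ i r, Real.sqrt (∑ j, (U i j r - Ubar i j r) ^ 2)
      ≤ ε / (n * Real.sqrt R)) :
    Real.sqrt (∑ x : (∀ i : Fin n, Fin (d i)), ∑ r : Fin R,
        ((∏ i, U i (x i) r) - (∏ i, Ubar i (x i) r)) ^ 2) ≤ ε := by
  let u : Fin R → ∀ i, EuclideanSpace ℝ (Fin (d i)) := fun r i ↦ WithLp.toLp 2 fun j ↦ U i j r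
  let ubar : Fin R → ∀ i, EuclideanSpace ℝ (Fin (d i)) :=
    fun r i ↦ WithLp.toLp 2 fun j ↦ Ubar i j r
  have hcolumn : ∀ r, √(∑ x : (∀ i : Fin n, Fin (d i)),
      ((∏ i, U i (x i) r) - (∏ i, Ubar i (x i) r)) ^ 2) ≤ ε / √R := fun r ↦
    calc _ = ‖outerProduct (u r) - outerProduct (ubar r)‖ := by
          simp [EuclideanSpace.real_norm_eq, u, ubar]
      _ ≤ ∑ i, ‖u r i - ubar r i‖ := norm_outerProduct_sub_le
          (fun i ↦ by simpa [EuclideanSpace.real_norm_eq, u] using hU i r)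
          (fun i ↦ by simpa [EuclideanSpace.real_norm_eq, ubar] using hUbar i r)
      _ ≤ ∑ _i : Fin n, ε / (n * √R) := sum_le_sum fun i _ ↦ by
          simpa [EuclideanSpace.real_norm_eq, u, ubar] using hclose i r
      _ = ε / √R := by
          rw [sum_const, card_univ, Fintype.card_fin, nsmul_eq_mul]
          field_simp
  rw [sum_comm]
  calc _ ≤ √R * (ε / √R) := by simpa using Real.sqrt_sum_le_sqrt_card_mul hcolumn
    _ = ε := by
      have : 0 < √(R : ℝ) := by positivity
      field_simp
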